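/- Let X be a real vector space with dim X = n ≥ 2 and let R, R' : X* → End(X) be linear maps whose values are trace-free operators (tr R(λ) = tr R'(λ) = 0 for all λ ∈ X*). If R(λ)(p) = R'(λ)(p) for every p ∈ X and every λ ∈ X* with λ(p) = 0, then R = R'. -/

import Mathlib

/-!
Let `D = R - R'`. Each `D λ` vanishes on `ker λ`, so it is the rank-one map `p ↦ λ p • D λ q`
for any `q` with `λ q = 1`, and tracelessness gives `λ (D λ q) = 0`. Evaluating the linearity
`D (λ + μ) = D λ + D μ` on a pair `p, q` with `λ p = μ q = 1`, `μ p = λ q = 0` gives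
`D λ p = D μ q`; hence also `μ (D λ q) = 0` for every `μ` independent of `λ`, so `D λ q = 0`.
-/

open Module

section

variable {K X V : Type*} [Field K] [AddCommGroup X] [Module K X] [AddCommGroup V] [Module K V]

theorem Module.Dual.exists_eq_smul_of_forall_apply_eq_zero {lam mu : Dual K X}
    (h : ∀ p, lam p = 0 → mu p = 0) : ∃ c : K, mu = c • lam := by
  have hmem := mem_span_of_iInf_ker_le_ker (L := fun _ : Unit ↦ lam) (K := mu)
    (by simpa [SetLike.le_def] using h)
  obtain ⟨c, hc⟩ := Submodule.mem_span_singleton.mp (by simpa using hmem)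
  exact ⟨c, hc.symm⟩

theorem Module.Dual.exists_apply_eq_one {lam : Dual K X} (h : lam ≠ 0) : ∃ q, lam q = 1 :=
  LinearMap.surjective_of_ne_zero h 1

theorem LinearMap.eq_smulRight_of_forall_apply_eq_zero {lam : Dual K X} {f : X →ₗ[K] V}
    (hf : ∀ p, lam p = 0 → f p = 0) {q : X} (hq : lam q = 1) : f = lam.smulRight (f q) := by
  ext p
  have : f (p - lam p • q) = 0 := hf _ (by simp [hq])
  rwa [map_sub, map_smul, sub_eq_zero] at this

theorem LinearMap.apply_apply_eq_zero_of_trace_eq_zero [FiniteDimensional K X]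
    {lam : Dual K X} {f : X →ₗ[K] X} (hf : ∀ p, lam p = 0 → f p = 0)
    (htr : trace K X f = 0) {q : X} (hq : lam q = 1) : lam (f q) = 0 := by
  rwa [eq_smulRight_of_forall_apply_eq_zero (f := f) hf hq, trace_smulRight] at htr

theorem LinearMap.apply_eq_apply_of_biorthogonal {D : Dual K X →ₗ[K] X →ₗ[K] V}
    (hD : ∀ lam p, lam p = 0 → D lam p = 0) {lam mu : Dual K X} {p q : X}
    (hlp : lam p = 1) (hmp : mu p = 0) (hlq : lam q = 0) (hmq : mu q = 1) :
    D lam p = D mu q := by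
  have hsum : D (lam + mu) (p - q) = 0 := hD _ _ (by simp [hlp, hmp, hlq, hmq])
  rwa [map_sub, sub_eq_zero, map_add, add_apply, add_apply, hD mu p hmp, hD lam q hlq,
    add_zero, zero_add] at hsum

variable [FiniteDimensional K X] {D : Dual K X →ₗ[K] X →ₗ[K] X}

theorem LinearMap.dual_apply_apply_eq_zero_of_biorthogonal
    (hD : ∀ lam p, lam p = 0 → D lam p = 0) (htr : ∀ lam, trace K X (D lam) = 0)
    {lam mu : Dual K X} {q q' : X}
    (hq : lam q = 1) (hlq' : lam q' = 0) (hmq' : mu q' = 1) : mu (D lam q) = 0 := by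
  -- `q - mu q • q'` and `q'` are biorthogonal to `lam` and `mu`
  have hshift : D lam q = D lam (q - mu q • q') := by simp [hD lam q' hlq']
  rw [hshift, apply_eq_apply_of_biorthogonal hD (by simp [hq, hlq']) (by simp [hmq']) hlq' hmq']
  exact apply_apply_eq_zero_of_trace_eq_zero (hD mu) (htr mu) hmq'

theorem LinearMap.eq_zero_of_forall_apply_eq_zero_of_trace_eq_zero
    (hD : ∀ lam p, lam p = 0 → D lam p = 0) (htr : ∀ lam, trace K X (D lam) = 0) :
    D = 0 := by
  ext lam p
  rcases eq_or_ne lam 0 with rfl | hlam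
  · simp
  obtain ⟨q, hq⟩ := lam.exists_apply_eq_one hlam
  suffices hw : D lam q = 0 by
    rw [eq_smulRight_of_forall_apply_eq_zero (hD lam) hq]
    simp [hw]
  refine (forall_dual_apply_eq_zero_iff K _).mp fun mu ↦ ?_
  by_cases hker : ∀ p, lam p = 0 → mu p = 0
  · obtain ⟨c, rfl⟩ := lam.exists_eq_smul_of_forall_apply_eq_zero hker
    simp [apply_apply_eq_zero_of_trace_eq_zero (hD lam) (htr lam) hq]
  · push Not at hker
    obtain ⟨a, hla, hma⟩ := hker
    exact dual_apply_apply_eq_zero_of_biorthogonal hD htr hq (q' := (mu a)⁻¹ • a)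
      (by simp [hla]) (by simp [hma])

end

theorem R_determined_by_SR
    {X : Type*} [AddCommGroup X] [Module ℝ X] [FiniteDimensional ℝ X]
    (R R' : Module.Dual ℝ X →ₗ[ℝ] (X →ₗ[ℝ] X))
    (htr : ∀ lam : Module.Dual ℝ X, LinearMap.trace ℝ X (R lam) = 0)
    (htr' : ∀ lam : Module.Dual ℝ X, LinearMap.trace ℝ X (R' lam) = 0)
    (h : ∀ (p : X) (lam : Module.Dual ℝ X), lam p = 0 → R lam p = R' lam p) :
    R = R' :=
  sub_eq_zero.mp <| LinearMap.eq_zero_of_forall_apply_eq_zero_of_trace_eq_zero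
    (fun lam p hp ↦ sub_eq_zero.mpr (h p lam hp)) (fun lam ↦ by simp [htr, htr'])
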